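/- For a real Banach space X and f ∈ S_{X*}, the following are equivalent: (i) f is a w*-semi point of continuity (w*-semi PC) of B_{X*}; (ii) for every bounded set C ⊆ X with inf f(C) > 0 there exist finitely many closed balls B₁, …, Bₙ in X such that C is contained in the closed convex hull of B₁ ∪ ⋯ ∪ Bₙ and 0 does not belong to this closed convex hull. -/

import Mathlib

open NormedSpace Metric Bornology Set

/-- A set of functionals is weak*-open if its image in `WeakDual ℝ X` is open. -/
def IsWeakStarOpen (X : Type*) [NormedAddCommGroup X] [NormedSpace ℝ X]
    (U : Set (StrongDual ℝ X)) : Prop :=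
  IsOpen ((⇑(StrongDual.toWeakDual (𝕜 := ℝ) (E := X))) '' U)

/-- `f ∈ S_{X*}` is a w*-semi point of continuity of `B_{X*}` if for every `ε > 0` there
is a nonempty relatively weak*-open subset `V` of `B_{X*}` with `V ⊆ B(f, ε)`. -/
noncomputable def IsWStarSemiPC (X : Type*) [NormedAddCommGroup X] [NormedSpace ℝ X]
    (f : StrongDual ℝ X) : Prop :=
  ∀ ε > 0, ∃ U : Set (StrongDual ℝ X), IsWeakStarOpen X U ∧
    (U ∩ closedBall 0 1).Nonempty ∧ U ∩ closedBall 0 1 ⊆ ball f ε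

section Aux

set_option maxHeartbeats 8000000

variable {X : Type*} [NormedAddCommGroup X] [NormedSpace ℝ X]

/-- Lower bound of a functional on a closed ball. -/
lemma ball_lower_bound (g : StrongDual ℝ X) (c : X) (r : ℝ) {y : X} (hy : y ∈ closedBall c r) :
    g c - r * ‖g‖ ≤ g y := by
  have h1 : g c - g y = g (c - y) := by simp
  have h2 : g (c - y) ≤ ‖g‖ * ‖c - y‖ := (le_abs_self _).trans (g.le_opNorm _)
  have h3 : ‖c - y‖ ≤ r := by
    rw [mem_closedBall, dist_comm] at hy
    simpa [dist_eq_norm] using hy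
  have hg : 0 ≤ ‖g‖ := norm_nonneg g
  nlinarith [h2, h3, mul_le_mul_of_nonneg_left h3 hg]

/-- A lower bound on each ball extends to the closed convex hull of the union. -/
lemma hull_lower_bound {n : ℕ} (c : Fin n → X) (r : Fin n → ℝ) (g : StrongDual ℝ X) (q : ℝ)
    (h : ∀ i, ∀ y ∈ closedBall (c i) (r i), q ≤ g y) :
    ∀ y ∈ closure (convexHull ℝ (⋃ i, closedBall (c i) (r i))), q ≤ g y := by
  intro y hy
  have hconv : Convex ℝ {x : X | q ≤ g x} :=
    convex_halfSpace_ge ⟨g.map_add, g.map_smul⟩ q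
  have hcl : IsClosed {x : X | q ≤ g x} := isClosed_le continuous_const g.continuous
  have hsub : (⋃ i, closedBall (c i) (r i)) ⊆ {x : X | q ≤ g x} := by
    rintro x hx
    obtain ⟨i, hi⟩ := mem_iUnion.mp hx
    exact h i x hi
  exact closure_minimal (convexHull_min hsub hconv) hcl hy

/-- Separation of a point from a closed convex set by a norm-one functional. -/
lemma exists_unit_sep [CompleteSpace X] {K : Set X} (hc : Convex ℝ K) (hcl : IsClosed K)
    (hne : K.Nonempty) {x : X} (hx : x ∉ K) :
    ∃ h : StrongDual ℝ X, ‖h‖ = 1 ∧ ∀ y ∈ K, h x < h y := by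
  obtain ⟨φ, u, hxu, hK⟩ := geometric_hahn_banach_point_closed hc hcl hx
  have hφ : φ ≠ 0 := by
    rintro rfl
    obtain ⟨y, hy⟩ := hne
    have := hK y hy
    simp only [ContinuousLinearMap.zero_apply] at hxu this
    linarith
  have hφn : (0:ℝ) < ‖φ‖ := norm_pos_iff.mpr hφ
  refine ⟨‖φ‖⁻¹ • φ, ?_, ?_⟩
  · rw [norm_smul, norm_inv, norm_norm]
    field_simp
  · intro y hy
    have h1 : φ x < φ y := hxu.trans (hK y hy)
    have h2 := mul_lt_mul_of_pos_left h1 (inv_pos.mpr hφn)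
    simpa using h2

/-- A norm-attaining-ish direction for a functional. -/
lemma exists_dir (g : StrongDual ℝ X) {s : ℝ} (hs : s < ‖g‖) :
    ∃ z : X, ‖z‖ ≤ 1 ∧ s < g z := by
  obtain ⟨x, hx, hgx⟩ := g.exists_lt_apply_of_lt_opNorm hs
  rcases le_or_gt 0 (g x) with h | h
  · exact ⟨x, hx.le, by rwa [Real.norm_eq_abs, abs_of_nonneg h] at hgx⟩
  · refine ⟨-x, by simpa using hx.le, ?_⟩
    rw [map_neg]
    rwa [Real.norm_eq_abs, abs_of_neg h] at hgx

/-- Separation of a unit functional from the segment `[0, h]`, `h` in the unit ball, amplified. -/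
lemma exists_sep_point {g h : StrongDual ℝ X} (hg : ‖g‖ = 1) (hh : ‖h‖ ≤ 1) (hne : h ≠ g) (A : ℝ) :
    ∃ c : X, h c + A ≤ g c ∧ A ≤ g c := by
  -- find c₁ with h c₁ < g c₁
  obtain ⟨x₁, hx₁⟩ : ∃ x, h x ≠ g x := by
    by_contra hcon
    push_neg at hcon
    exact hne (ContinuousLinearMap.ext hcon)
  obtain ⟨c₁, hc₁⟩ : ∃ c₁ : X, h c₁ < g c₁ := by
    rcases lt_or_gt_of_ne hx₁ with h' | h'
    · exact ⟨x₁, h'⟩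
    · exact ⟨-x₁, by simpa using h'⟩
  set gap : ℝ := g c₁ - h c₁ with hgap
  have hgappos : 0 < gap := by simp [hgap]; linarith
  set lam : ℝ := 2 * |g c₁| + 2 with hlam
  have hlampos : (0:ℝ) < lam := by positivity
  set rho : ℝ := min (1/2) (gap / (2 * lam)) with hrho
  have hrhopos : 0 < rho := by
    apply lt_min (by norm_num)
    positivity
  obtain ⟨z, hz1, hz2⟩ := exists_dir g (show 1 - rho < ‖g‖ by rw [hg]; linarith)
  set c₂ : X := c₁ + lam • z with hc₂
  have hgz1 : g z ≤ 1 := by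
    calc g z ≤ |g z| := le_abs_self _
    _ ≤ ‖g‖ * ‖z‖ := g.le_opNorm z
    _ ≤ 1 := by rw [hg]; simpa using hz1
  have hgc₂ : g c₂ = g c₁ + lam * g z := by simp [hc₂]
  have hhc₂ : h c₂ = h c₁ + lam * h z := by simp [hc₂]
  have hhz : h z ≤ 1 := by
    calc h z ≤ |h z| := le_abs_self _
    _ ≤ ‖h‖ * ‖z‖ := h.le_opNorm z
    _ ≤ 1 := by
        apply mul_le_one₀ hh (norm_nonneg z) hz1
  -- g c₂ is large positive
  have key1 : 1 ≤ g c₂ := by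
    rw [hgc₂]
    have : lam * (1 - rho) ≤ lam * g z := by
      apply mul_le_mul_of_nonneg_left hz2.le hlampos.le
    have hrho2 : rho ≤ 1/2 := min_le_left _ _
    have habs : -|g c₁| ≤ g c₁ := neg_abs_le _
    nlinarith
  -- gap persists
  have key2 : gap / 2 ≤ g c₂ - h c₂ := by
    rw [hgc₂, hhc₂]
    have h1 : lam * (1 - rho) ≤ lam * g z := mul_le_mul_of_nonneg_left hz2.le hlampos.le
    have h2 : lam * h z ≤ lam * 1 := mul_le_mul_of_nonneg_left hhz hlampos.le
    have h3 : rho ≤ gap / (2 * lam) := min_le_right _ _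
    have h4 : lam * rho ≤ gap / 2 := by
      have := (le_div_iff₀ (by positivity : (0:ℝ) < 2*lam)).mp h3
      nlinarith
    nlinarith
  -- amplify
  set A' : ℝ := max A 1 with hA'
  have hA'pos : 0 < A' := lt_of_lt_of_le one_pos (le_max_right _ _)
  set b : ℝ := g c₂ - h c₂ with hb
  have hbpos : 0 < b := lt_of_lt_of_le (by positivity) key2
  set a : ℝ := g c₂ with ha
  have hapos : 0 < a := lt_of_lt_of_le one_pos key1
  set mu : ℝ := max (A' / a) (A' / b) with hmu
  have hmupos : 0 < mu := lt_of_lt_of_le (by positivity) (le_max_left _ _)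
  refine ⟨mu • c₂, ?_, ?_⟩
  · have : A' / b ≤ mu := le_max_right _ _
    have h5 : A' ≤ mu * b := by
      rw [div_le_iff₀ hbpos] at this; linarith
    have h6 : A ≤ A' := le_max_left _ _
    have : h (mu • c₂) = mu * h c₂ := by simp
    rw [this]
    have : g (mu • c₂) = mu * g c₂ := by simp
    rw [this]
    have hexp : mu * b = mu * g c₂ - mu * h c₂ := by rw [hb]; ring
    linarith
  · have : A' / a ≤ mu := le_max_left _ _
    have h5 : A' ≤ mu * a := by
      rw [div_le_iff₀ hapos] at this; linarith
    have h6 : A ≤ A' := le_max_left _ _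
    have : g (mu • c₂) = mu * g c₂ := by simp
    rw [this]
    nlinarith [hmupos.le, hapos.le]

lemma cylinder_subset_of_isOpen {W : Set (WeakDual ℝ X)} (hW : IsOpen W) {w₀ : WeakDual ℝ X}
    (hw₀ : w₀ ∈ W) :
    ∃ (I : Finset X) (β : ℝ), 0 < β ∧
      {w : WeakDual ℝ X | ∀ x ∈ I, |w x - w₀ x| < β} ⊆ W := by
  obtain ⟨O, hO, hOW⟩ : ∃ O : Set (X → ℝ), IsOpen O ∧
      (fun (w : WeakDual ℝ X) (x : X) => w x) ⁻¹' O = W :=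
    isOpen_induced_iff.mp hW
  have hmem : (fun x => w₀ x) ∈ O := by
    rw [← hOW] at hw₀; exact hw₀
  obtain ⟨I, u, hu, hpi⟩ := isOpen_pi_iff.mp hO _ hmem
  have hball : ∀ x ∈ I, ∃ b > 0, Metric.ball (w₀ x) b ⊆ u x := by
    intro x hx
    exact Metric.isOpen_iff.mp (hu x hx).1 _ (hu x hx).2
  choose! b hbpos hbsub using hball
  rcases I.eq_empty_or_nonempty with hI | hI
  · refine ⟨I, 1, one_pos, ?_⟩
    intro w _
    rw [← hOW]
    apply hpi
    intro x hx
    rw [hI] at hx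
    exact absurd hx (by simp)
  · have hIattach : I.attach.Nonempty := Finset.attach_nonempty_iff.mpr hI
    set β : ℝ := I.attach.inf' hIattach (fun x => b x.1) with hβ
    have hβpos : 0 < β := by
      rw [hβ, Finset.lt_inf'_iff]
      intro x _
      exact hbpos x.1 x.2
    refine ⟨I, β, hβpos, ?_⟩
    intro w hw
    rw [← hOW]
    apply hpi
    intro x hx
    apply hbsub x hx
    rw [Metric.mem_ball, Real.dist_eq]
    calc |w x - w₀ x| < β := hw x hx
    _ ≤ b x := Finset.inf'_le _ (Finset.mem_attach _ ⟨x, hx⟩)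

lemma findim_cylinder [CompleteSpace X] (I : Finset X)
    (hspan : Submodule.span ℝ (I : Set X) = ⊤) (f : StrongDual ℝ X) {ε : ℝ} (hε : 0 < ε) :
    ∃ β > 0, ∀ h : StrongDual ℝ X, (∀ x ∈ I, |h x - f x| < β) → ‖h - f‖ < ε := by
  haveI : FiniteDimensional ℝ X := by
    exact ⟨⟨I, hspan⟩⟩
  set L : StrongDual ℝ X →ₗ[ℝ] (↥I → ℝ) :=
    { toFun := fun h => fun x => h x.1
      map_add' := by intros; ext; simp
      map_smul' := by intros; ext; simp } with hL
  have hinj : Function.Injective L := by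
    rw [← LinearMap.ker_eq_bot]
    rw [Submodule.eq_bot_iff]
    intro h hh
    have hzero : ∀ x ∈ I, h x = 0 := by
      intro x hx
      have := congrFun hh ⟨x, hx⟩
      simpa [hL] using this
    have hker : Submodule.span ℝ (I : Set X) ≤ LinearMap.ker (h : X →ₗ[ℝ] ℝ) := by
      rw [Submodule.span_le]
      intro x hx
      simp only [SetLike.mem_coe, LinearMap.mem_ker, ContinuousLinearMap.coe_coe]
      exact hzero x hx
    rw [hspan] at hker
    ext x
    simpa using hker (Submodule.mem_top : x ∈ ⊤)
  set e := LinearEquiv.ofInjective L hinj with he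
  have hcont : Continuous (e.symm : ↥(LinearMap.range L) → StrongDual ℝ X) :=
    LinearMap.continuous_of_finiteDimensional e.symm.toLinearMap
  have hca : ContinuousAt (e.symm : ↥(LinearMap.range L) → StrongDual ℝ X) (e f) :=
    hcont.continuousAt
  obtain ⟨δ, hδpos, hδ⟩ := Metric.continuousAt_iff.mp hca ε hε
  refine ⟨δ, hδpos, ?_⟩
  intro h hh
  have hdist : dist (e h) (e f) < δ := by
    rw [Subtype.dist_eq]
    have h1 : ((e h : ↥(LinearMap.range L)) : ↥I → ℝ) = L h := by
      simp [he, LinearEquiv.ofInjective_apply]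
    have h2 : ((e f : ↥(LinearMap.range L)) : ↥I → ℝ) = L f := by
      simp [he, LinearEquiv.ofInjective_apply]
    rw [h1, h2]
    rw [dist_pi_lt_iff hδpos]
    intro x
    rw [Real.dist_eq]
    exact hh x.1 x.2
  have := hδ hdist
  rw [e.symm_apply_apply, e.symm_apply_apply] at this
  rwa [dist_eq_norm] at this

lemma image_toWeakDual (U : Set (StrongDual ℝ X)) :
    (⇑(StrongDual.toWeakDual (𝕜 := ℝ) (E := X))) '' U
      = {w : WeakDual ℝ X | WeakDual.toStrongDual w ∈ U} := by
  ext w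
  constructor
  · rintro ⟨h, hh, rfl⟩
    exact hh
  · intro hw
    exact ⟨WeakDual.toStrongDual w, hw, rfl⟩

lemma isWeakStarOpen_cylinder (I : Finset X) (h₀ : StrongDual ℝ X) (β : ℝ) :
    IsWeakStarOpen X {h : StrongDual ℝ X | ∀ x ∈ I, |h x - h₀ x| < β} := by
  rw [IsWeakStarOpen, image_toWeakDual]
  have heq : {w : WeakDual ℝ X | WeakDual.toStrongDual w ∈
      {h : StrongDual ℝ X | ∀ x ∈ I, |h x - h₀ x| < β}}
      = ⋂ x ∈ I, {w : WeakDual ℝ X | |w x - h₀ x| < β} := by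
    ext w; simp [Set.mem_iInter]
  rw [heq]
  apply isOpen_biInter_finset
  intro x _
  have : {w : WeakDual ℝ X | |w x - h₀ x| < β}
      = (fun w : WeakDual ℝ X => w x) ⁻¹' (Metric.ball (h₀ x) β) := by
    ext w; simp [Real.dist_eq]
  rw [this]
  exact (WeakDual.eval_continuous x).isOpen_preimage _ isOpen_ball

lemma exists_perp [CompleteSpace X] (I : Finset X)
    (hspan : Submodule.span ℝ (I : Set X) ≠ ⊤) :
    ∃ k : StrongDual ℝ X, k ≠ 0 ∧ ∀ x ∈ I, k x = 0 := by
  set p := Submodule.span ℝ (I : Set X) with hp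
  haveI : FiniteDimensional ℝ p := FiniteDimensional.span_of_finite ℝ I.finite_toSet
  have hclosed : IsClosed (p : Set X) := Submodule.closed_of_finiteDimensional p
  obtain ⟨x, hx⟩ : ∃ x, x ∉ p := by
    by_contra hcon
    push_neg at hcon
    exact hspan (Submodule.eq_top_iff'.mpr hcon)
  obtain ⟨φ, u, hxu, hpφ⟩ := geometric_hahn_banach_point_closed p.convex hclosed hx
  have hvan : ∀ y ∈ p, φ y = 0 := by
    intro y hy
    by_contra hne
    have hmem : ((u - 1) / φ y) • y ∈ p := Submodule.smul_mem p _ hy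
    have := hpφ _ hmem
    rw [map_smul] at this
    rw [smul_eq_mul, div_mul_cancel₀ _ hne] at this
    linarith
  have h0p : (0 : X) ∈ p := Submodule.zero_mem p
  have hu0 : u < 0 := by
    have := hpφ 0 h0p
    simpa using this
  refine ⟨φ, ?_, ?_⟩
  · intro hzero
    rw [hzero] at hxu
    simp at hxu
    linarith
  · intro y hy
    exact hvan y (Submodule.subset_span hy)

lemma exists_good_nbhd [CompleteSpace X] {f : StrongDual ℝ X} (hf : ‖f‖ = 1)
    (hPC : IsWStarSemiPC X f) {ε : ℝ} (hε : 0 < ε) :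
    ∃ (N : Set (StrongDual ℝ X)) (g : StrongDual ℝ X), IsWeakStarOpen X N ∧ g ∈ N ∧ ‖g‖ = 1 ∧
      ∀ h ∈ N, ‖h‖ ≤ 1 → ‖h - f‖ < ε := by
  obtain ⟨U, hUopen, ⟨h₀, h₀U, h₀B⟩, hUsub⟩ := hPC ε hε
  have h₀norm : ‖h₀‖ ≤ 1 := by rwa [mem_closedBall_zero_iff] at h₀B
  have hUsub' : ∀ h ∈ U, ‖h‖ ≤ 1 → ‖h - f‖ < ε := by
    intro h hU hn
    have := hUsub ⟨hU, mem_closedBall_zero_iff.mpr hn⟩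
    rwa [mem_ball_iff_norm] at this
  have hw₀ : StrongDual.toWeakDual h₀ ∈ (⇑(StrongDual.toWeakDual (𝕜 := ℝ) (E := X))) '' U :=
    ⟨h₀, h₀U, rfl⟩
  obtain ⟨I, β, hβ, hcyl⟩ := cylinder_subset_of_isOpen hUopen hw₀
  by_cases hspan : Submodule.span ℝ (I : Set X) = ⊤
  · obtain ⟨β', hβ', hball⟩ := findim_cylinder I hspan f hε
    refine ⟨{h : StrongDual ℝ X | ∀ x ∈ I, |h x - f x| < β'}, f,
      isWeakStarOpen_cylinder I f β', ?_, hf, ?_⟩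
    · intro x _
      simpa using hβ'
    · intro h hN _
      exact hball h hN
  · obtain ⟨k, hk0, hkI⟩ := exists_perp I hspan
    set N : Set (StrongDual ℝ X) := {h : StrongDual ℝ X | ∀ x ∈ I, |h x - h₀ x| < β} with hN
    have hNU : N ⊆ U := by
      intro h hh
      have hmem : StrongDual.toWeakDual h ∈ {w : WeakDual ℝ X | ∀ x ∈ I, |w x - (StrongDual.toWeakDual h₀) x| < β} := hh
      obtain ⟨h', hh', heq⟩ := hcyl hmem
      have : h' = h := StrongDual.toWeakDual.injective heq
      rwa [← this]
    -- IVT to find a norm-one element of the cylinder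
    have hknorm : (0:ℝ) < ‖k‖ := norm_pos_iff.mpr hk0
    set T : ℝ := (‖h₀‖ + 2) / ‖k‖ with hT
    have hTpos : 0 ≤ T := by positivity
    have hcont : Continuous fun t : ℝ => ‖h₀ + t • k‖ :=
      (continuous_const.add (continuous_id.smul continuous_const)).norm
    have hvalT : 2 ≤ ‖h₀ + T • k‖ := by
      have h1 : ‖T • k‖ ≤ ‖h₀ + T • k‖ + ‖h₀‖ := by
        calc ‖T • k‖ = ‖(h₀ + T • k) - h₀‖ := by rw [add_sub_cancel_left]
        _ ≤ ‖h₀ + T • k‖ + ‖h₀‖ := norm_sub_le _ _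
      have h2 : ‖T • k‖ = ‖h₀‖ + 2 := by
        rw [norm_smul, Real.norm_eq_abs, abs_of_nonneg hTpos, hT,
          div_mul_cancel₀ _ (ne_of_gt hknorm)]
      linarith
    have h1mem : (1:ℝ) ∈ Icc ‖h₀ + (0:ℝ) • k‖ ‖h₀ + T • k‖ := by
      constructor
      · simpa using h₀norm
      · linarith
    obtain ⟨t₀, _, hgt⟩ := intermediate_value_Icc hTpos hcont.continuousOn h1mem
    refine ⟨N, h₀ + t₀ • k, isWeakStarOpen_cylinder I h₀ β, ?_, hgt, ?_⟩
    · intro x hx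
      simp only [ContinuousLinearMap.add_apply, ContinuousLinearMap.coe_smul',
        Pi.smul_apply, smul_eq_mul]
      rw [hkI x hx]
      simpa using hβ
    · intro h hh hn
      exact hUsub' h (hNU hh) hn

theorem forward_dir [CompleteSpace X] {f : StrongDual ℝ X} (hf : ‖f‖ = 1) (hPC : IsWStarSemiPC X f)
    (C : Set X) (hCb : IsBounded C) (hCpos : 0 < sInf (⇑f '' C)) :
    ∃ (n : ℕ) (c : Fin n → X) (r : Fin n → ℝ), (∀ i, 0 < r i) ∧
      C ⊆ closure (convexHull ℝ (⋃ i, closedBall (c i) (r i))) ∧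
      (0 : X) ∉ closure (convexHull ℝ (⋃ i, closedBall (c i) (r i))) := by
  -- C is nonempty
  rcases C.eq_empty_or_nonempty with rfl | hCne
  · simp [Real.sInf_empty] at hCpos
  obtain ⟨M₀, hM₀⟩ := isBounded_iff_forall_norm_le.mp hCb
  set M : ℝ := max M₀ 1 with hM
  have hM1 : (1:ℝ) ≤ M := le_max_right _ _
  have hMpos : (0:ℝ) < M := lt_of_lt_of_le one_pos hM1
  have hMC : ∀ x ∈ C, ‖x‖ ≤ M := fun x hx => (hM₀ x hx).trans (le_max_left _ _)
  set δ : ℝ := sInf (⇑f '' C) with hδdef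
  have hδpos : 0 < δ := hCpos
  have habs : ∀ (h : StrongDual ℝ X), ‖h‖ ≤ 1 → ∀ x ∈ C, |h x| ≤ M := by
    intro h hh x hx
    calc |h x| ≤ ‖h‖ * ‖x‖ := h.le_opNorm x
    _ ≤ 1 * M := mul_le_mul hh (hMC x hx) (norm_nonneg x) zero_le_one
    _ = M := one_mul M
  have hbdd : BddBelow (⇑f '' C) := by
    refine ⟨-M, ?_⟩
    rintro y ⟨x, hx, rfl⟩
    have := habs f hf.le x hx
    have := abs_le.mp this
    linarith [this.1]
  have hδle : ∀ x ∈ C, δ ≤ f x := fun x hx => csInf_le hbdd (mem_image_of_mem f hx)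
  set εt : ℝ := δ / (4 * (M + 1)) with hεt
  have hεtpos : 0 < εt := by positivity
  have hr₀eq : εt * (M + 1) = δ / 4 := by
    rw [hεt]; field_simp
  obtain ⟨N, g, hNopen, hgN, hgnorm, hNprop⟩ := exists_good_nbhd hf hPC hεtpos
  obtain ⟨z, hz1, hz2⟩ := exists_dir g (show (1:ℝ)/2 < ‖g‖ by rw [hgnorm]; norm_num)
  set c₀ : X := δ • z with hc₀
  set r₀ : ℝ := δ / 4 with hr₀
  have hr₀pos : 0 < r₀ := by positivity
  -- weak-* compact set to cover
  set Nw : Set (WeakDual ℝ X) := (⇑(StrongDual.toWeakDual (𝕜 := ℝ) (E := X))) '' N with hNw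
  have hNwopen : IsOpen Nw := hNopen
  set T : Set (WeakDual ℝ X) :=
    (WeakDual.toStrongDual ⁻¹' closedBall 0 1) \ Nw with hT
  have hTcomp : IsCompact T := (WeakDual.isCompact_closedBall (0 : StrongDual ℝ X) 1).diff hNwopen
  have hsep : ∀ w ∈ T, ∃ cw : X,
      (WeakDual.toStrongDual w) cw + (3*M+3) ≤ g cw ∧ (3*M+3) ≤ g cw := by
    intro w hw
    have hwB : ‖WeakDual.toStrongDual w‖ ≤ 1 := by
      have := hw.1
      rwa [Set.mem_preimage, mem_closedBall_zero_iff] at this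
    have hwne : WeakDual.toStrongDual w ≠ g := by
      intro heq
      apply hw.2
      rw [hNw, image_toWeakDual]
      show WeakDual.toStrongDual w ∈ N
      rw [heq];  exact hgN
    exact exists_sep_point hgnorm hwB hwne _
  choose! cc hcc1 hcc2 using hsep
  set Ufam : ↥T → Set (WeakDual ℝ X) := fun i =>
    {v : WeakDual ℝ X | v (cc i.1) < (WeakDual.toStrongDual i.1) (cc i.1) + 1} with hUfam
  have hUopen : ∀ i : ↥T, IsOpen (Ufam i) := by
    intro i
    have : Ufam i = (fun v : WeakDual ℝ X => v (cc i.1)) ⁻¹'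
        (Iio ((WeakDual.toStrongDual i.1) (cc i.1) + 1)) := rfl
    rw [this]
    exact (WeakDual.eval_continuous _).isOpen_preimage _ isOpen_Iio
  have hUcov : T ⊆ ⋃ i : ↥T, Ufam i := by
    intro w hw
    exact mem_iUnion.mpr ⟨⟨w, hw⟩, by simp [hUfam]⟩
  obtain ⟨t, hcov⟩ := hTcomp.elim_finite_subcover Ufam hUopen hUcov
  set m : ℕ := t.card with hm
  set e := t.equivFin with he
  set cW : Fin m → X := fun i => cc ((e.symm i).1 : WeakDual ℝ X) with hcW
  set aW : Fin m → ℝ := fun i =>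
    (WeakDual.toStrongDual ((e.symm i).1 : WeakDual ℝ X)) (cW i) with haW
  set rW : Fin m → ℝ := fun i => max (aW i + 1) 0 + 2*M with hrW
  set c : Fin (m+1) → X := Fin.cons c₀ cW with hc
  set r : Fin (m+1) → ℝ := Fin.cons r₀ rW with hr
  have hTm : ∀ i : Fin m, ((e.symm i).1 : WeakDual ℝ X) ∈ T := fun i => (e.symm i).1.2
  have hrWpos : ∀ i, 0 < rW i := by
    intro i
    have : (0:ℝ) ≤ max (aW i + 1) 0 := le_max_right _ _
    simp only [hrW]
    nlinarith
  have hrpos : ∀ i, 0 < r i := by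
    intro i
    refine Fin.cases ?_ ?_ i
    · simpa [hr] using hr₀pos
    · intro j
      simpa [hr] using hrWpos j
  -- lower bounds for g on the balls
  have hgz3 : δ / 2 ≤ g c₀ := by
    have : δ * (1/2) ≤ δ * g z := mul_le_mul_of_nonneg_left hz2.le hδpos.le
    have hgc₀ : g c₀ = δ * g z := by simp [hc₀]
    linarith
  have hgball : ∀ i : Fin (m+1), ∀ y ∈ closedBall (c i) (r i), min (δ/4) 1 ≤ g y := by
    intro i
    refine Fin.cases ?_ ?_ i
    · intro y hy
      have h1 := ball_lower_bound g (c 0) (r 0) hy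
      have hco : c 0 = c₀ := by simp [hc]
      have hro : r 0 = r₀ := by simp [hr]
      rw [hco, hro, hgnorm] at h1
      have : min (δ/4) 1 ≤ δ/4 := min_le_left _ _
      simp only [mul_one] at h1
      linarith
    · intro j y hy
      have h1 := ball_lower_bound g (c j.succ) (r j.succ) hy
      have hco : c j.succ = cW j := by simp [hc]
      have hro : r j.succ = rW j := by simp [hr]
      rw [hco, hro, hgnorm] at h1
      have h2 := hcc1 _ (hTm j)
      have h3 := hcc2 _ (hTm j)
      have h4 : max (aW j + 1) 0 ≤ max (aW j) 0 + 1 := by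
        rcases le_total (aW j + 1) 0 with h' | h'
        · simp [max_eq_right h']
          positivity
        · rcases le_total (aW j) 0 with h'' | h''
          · rw [max_eq_right h'']; simp; linarith
          · rw [max_eq_left h'', max_eq_left (by linarith : (0:ℝ) ≤ aW j + 1)]
      have h5 : max (aW j) 0 + (3*M+3) ≤ g (cW j) := by
        rcases le_total (aW j) 0 with h'' | h''
        · rw [max_eq_right h'']; simpa using h3
        · rw [max_eq_left h'']; exact hcc1 _ (hTm j)
      have h6 : min (δ/4) 1 ≤ 1 := min_le_right _ _
      simp only [mul_one] at h1
      simp only [hrW] at h1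
      nlinarith
  set K : Set X := closure (convexHull ℝ (⋃ i, closedBall (c i) (r i))) with hK
  have hgK : ∀ y ∈ K, min (δ/4) 1 ≤ g y := hull_lower_bound c r g _ hgball
  have h0K : (0:X) ∉ K := by
    intro h0
    have := hgK 0 h0
    have hq : 0 < min (δ/4) 1 := lt_min (by positivity) one_pos
    have hg0 : g (0:X) = 0 := map_zero g
    rw [hg0] at this
    linarith
  have hc₀K : c₀ ∈ K := by
    apply subset_closure
    apply subset_convexHull
    apply mem_iUnion.mpr
    refine ⟨0, ?_⟩
    have hco : c 0 = c₀ := by simp [hc]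
    have hro : r 0 = r₀ := by simp [hr]
    rw [hco, hro]
    exact mem_closedBall_self hr₀pos.le
  have hCK : C ⊆ K := by
    intro x hx
    by_contra hxK
    obtain ⟨h, hh1, hh2⟩ := exists_unit_sep ((convex_convexHull ℝ _).closure) isClosed_closure
      ⟨c₀, hc₀K⟩ hxK
    have hxlb : -M ≤ h x := by
      have := abs_le.mp (habs h hh1.le x hx)
      linarith [this.1]
    by_cases hmem : StrongDual.toWeakDual h ∈ Nw
    · -- h is in the good neighborhood: use ball 0
      have hhN : h ∈ N := by
        rw [hNw, image_toWeakDual] at hmem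
        exact hmem
      have hhf : ‖h - f‖ < εt := hNprop h hhN hh1.le
      have hhx : δ - εt * M ≤ h x := by
        have h1 : |h x - f x| ≤ εt * M := by
          calc |h x - f x| = |(h - f) x| := by simp
          _ ≤ ‖h - f‖ * ‖x‖ := (h - f).le_opNorm x
          _ ≤ εt * M := mul_le_mul hhf.le (hMC x hx) (norm_nonneg x) hεtpos.le
        have h2 := (abs_le.mp h1).1
        have h3 := hδle x hx
        linarith
      obtain ⟨u, hu1, hu2⟩ := exists_dir (-h)
        (show 1 - εt/r₀ < ‖-h‖ by rw [norm_neg, hh1]; have h9 : 0 < εt/r₀ := div_pos hεtpos hr₀pos; linarith)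
      have hu3 : h u < εt/r₀ - 1 := by
        have : (-h) u = - h u := by simp
        linarith [hu2, this ▸ hu2]
      set y : X := c₀ + r₀ • u with hy
      have hyK : y ∈ K := by
        apply subset_closure
        apply subset_convexHull
        apply mem_iUnion.mpr
        refine ⟨0, ?_⟩
        have hco : c 0 = c₀ := by simp [hc]
        have hro : r 0 = r₀ := by simp [hr]
        rw [hco, hro, mem_closedBall, hy]
        calc dist (c₀ + r₀ • u) c₀ = ‖r₀ • u‖ := by
              rw [dist_eq_norm]; congr 1; abel
        _ = r₀ * ‖u‖ := by rw [norm_smul, Real.norm_eq_abs, abs_of_nonneg hr₀pos.le]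
        _ ≤ r₀ := by nlinarith
      have hyval : h y = δ * h z + r₀ * h u := by
        simp [hy, hc₀]
      have hhz : h z ≤ 1 := by
        calc h z ≤ |h z| := le_abs_self _
        _ ≤ ‖h‖ * ‖z‖ := h.le_opNorm z
        _ ≤ 1 := by rw [hh1]; simpa using hz1
      have hyub : h y < δ - εt * M := by
        rw [hyval]
        have h1 : δ * h z ≤ δ := by nlinarith
        have h2 : r₀ * h u < r₀ * (εt/r₀ - 1) := by
          exact mul_lt_mul_of_pos_left hu3 hr₀pos
        have h3 : r₀ * (εt/r₀ - 1) = εt - r₀ := by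
          field_simp
        have h4 : r₀ = εt * (M+1) := hr₀eq.symm
        nlinarith
      have := hh2 y hyK
      linarith
    · -- h is in the covered compact part
      have hhT : StrongDual.toWeakDual h ∈ T := by
        constructor
        · rw [Set.mem_preimage, mem_closedBall_zero_iff]
          exact hh1.le
        · exact hmem
      obtain ⟨i, hit, hUi⟩ := Set.mem_iUnion₂.mp (hcov hhT)
      set st : ↥t := ⟨i, hit⟩ with hst
      set j : Fin m := e st with hj
      have hji : e.symm j = st := by rw [hj]; exact e.symm_apply_apply st
      have hcWj : cW j = cc i.1 := by
        simp only [hcW]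
        rw [hji]
      have haWj : aW j = (WeakDual.toStrongDual i.1) (cc i.1) := by
        simp only [haW]
        rw [hji, hcWj]
      have hUi' : h (cW j) < aW j + 1 := by
        have hthis : (StrongDual.toWeakDual h) (cc i.1) < (WeakDual.toStrongDual i.1) (cc i.1) + 1 := hUi
        rw [hcWj, haWj]
        exact hthis
      obtain ⟨u, hu1, hu2⟩ := exists_dir (-h)
        (show 1 - M/(rW j) < ‖-h‖ by
          rw [norm_neg, hh1]
          have h9 : 0 < M/(rW j) := div_pos hMpos (hrWpos j)
          linarith)
      have hu3 : h u < M/(rW j) - 1 := by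
        have hneg : (-h) u = - h u := by simp
        linarith [hneg ▸ hu2]
      set y : X := cW j + (rW j) • u with hy
      have hyK : y ∈ K := by
        apply subset_closure
        apply subset_convexHull
        apply mem_iUnion.mpr
        refine ⟨j.succ, ?_⟩
        have hco : c j.succ = cW j := by simp [hc]
        have hro : r j.succ = rW j := by simp [hr]
        rw [hco, hro, mem_closedBall, hy]
        calc dist (cW j + rW j • u) (cW j) = ‖rW j • u‖ := by
              rw [dist_eq_norm]; congr 1; abel
        _ = rW j * ‖u‖ := by rw [norm_smul, Real.norm_eq_abs, abs_of_nonneg (hrWpos j).le]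
        _ ≤ rW j := by nlinarith [hrWpos j]
      have hyub : h y < -M := by
        have hyval : h y = h (cW j) + rW j * h u := by simp [hy]
        have h2 : rW j * h u < rW j * (M/(rW j) - 1) :=
          mul_lt_mul_of_pos_left hu3 (hrWpos j)
        have h3 : rW j * (M/(rW j) - 1) = M - rW j := by
          rw [mul_sub, mul_div_cancel₀ _ (ne_of_gt (hrWpos j)), mul_one]
        have h4 : aW j + 1 ≤ max (aW j + 1) 0 := le_max_left _ _
        have h5 : rW j = max (aW j + 1) 0 + 2*M := by rw [hrW]
        have h6 : rW j * h u < M - rW j := by rw [← h3]; exact h2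
        linarith [hyval, hUi', h4, h5, h6]
      have := hh2 y hyK
      linarith
  exact ⟨m+1, c, r, hrpos, hCK, h0K⟩

theorem backward_dir [CompleteSpace X] {f : StrongDual ℝ X} (hf : ‖f‖ = 1)
    (hRHS : ∀ C : Set X, IsBounded C → 0 < sInf (⇑f '' C) →
      ∃ (n : ℕ) (c : Fin n → X) (r : Fin n → ℝ), (∀ i, 0 < r i) ∧
        C ⊆ closure (convexHull ℝ (⋃ i, closedBall (c i) (r i))) ∧
        (0 : X) ∉ closure (convexHull ℝ (⋃ i, closedBall (c i) (r i)))) :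
    IsWStarSemiPC X f := by
  intro ε hε
  set ε' : ℝ := min ε 1 with hε'def
  have hε'pos : 0 < ε' := lt_min hε one_pos
  have hε'le1 : ε' ≤ 1 := min_le_right _ _
  have hε'leε : ε' ≤ ε := min_le_left _ _
  set σ : ℝ := ε' / 100 with hσ
  have hσpos : 0 < σ := by positivity
  have hσle : σ ≤ 1 / 100 := by rw [hσ]; linarith
  -- the near-norming point x̂ with f x̂ = 1
  have hinv : 1 / (1 + σ) < ‖f‖ := by
    rw [hf, div_lt_one (by linarith)]
    linarith
  obtain ⟨x₀, hx₀n, hx₀v⟩ := exists_dir f hinv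
  have hfx₀pos : 0 < f x₀ := lt_trans (by positivity) hx₀v
  set xh : X := (f x₀)⁻¹ • x₀ with hxh
  have hfxh : f xh = 1 := by
    rw [hxh, map_smul, smul_eq_mul, inv_mul_cancel₀ (ne_of_gt hfx₀pos)]
  have hxhn : ‖xh‖ ≤ 1 + σ := by
    rw [hxh, norm_smul, Real.norm_eq_abs, abs_of_pos (inv_pos.mpr hfx₀pos)]
    have h1 : (f x₀)⁻¹ ≤ 1 + σ := by
      rw [inv_le_comm₀ hfx₀pos (by linarith : (0:ℝ) < 1 + σ)]
      rw [← one_div]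
      exact hx₀v.le
    calc (f x₀)⁻¹ * ‖x₀‖ ≤ (f x₀)⁻¹ * 1 :=
          mul_le_mul_of_nonneg_left hx₀n (inv_pos.mpr hfx₀pos).le
    _ ≤ 1 + σ := by rwa [mul_one]
  set ρ : ℝ := 100 / ε' with hρ
  have hρpos : 0 < ρ := by positivity
  -- the test set C
  set C : Set X := (fun u => xh + ρ • u) '' (closedBall (0:X) 1 ∩ {u | f u = 0}) with hC
  have hxhC : xh ∈ C := by
    refine ⟨0, ⟨mem_closedBall_self zero_le_one, by simp⟩, by simp⟩
  have hCb : IsBounded C := by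
    rw [isBounded_iff_forall_norm_le]
    refine ⟨‖xh‖ + ρ, ?_⟩
    rintro y ⟨u, ⟨hu1, _⟩, rfl⟩
    rw [mem_closedBall_zero_iff] at hu1
    calc ‖xh + ρ • u‖ ≤ ‖xh‖ + ‖ρ • u‖ := norm_add_le _ _
    _ ≤ ‖xh‖ + ρ := by
        have h7 : ‖ρ • u‖ = ρ * ‖u‖ := by
          rw [norm_smul, Real.norm_eq_abs, abs_of_pos hρpos]
        rw [h7]
        nlinarith
  have himg : ⇑f '' C = {1} := by
    apply Subset.antisymm
    · rintro y ⟨x, ⟨u, ⟨_, hu2⟩, rfl⟩, rfl⟩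
      simp only [mem_singleton_iff, map_add, map_smul, smul_eq_mul]
      rw [hfxh]
      have : f u = 0 := hu2
      rw [this]
      ring
    · rintro y hy
      rw [mem_singleton_iff] at hy
      subst hy
      exact ⟨xh, hxhC, hfxh⟩
  have hCpos : 0 < sInf (⇑f '' C) := by
    rw [himg, csInf_singleton]
    norm_num
  obtain ⟨n, c, r, hrpos, hCK, h0K⟩ := hRHS C hCb hCpos
  set K : Set X := closure (convexHull ℝ (⋃ i, closedBall (c i) (r i))) with hK
  have hKcl : IsClosed K := isClosed_closure
  have hKconv : Convex ℝ K := (convex_convexHull ℝ _).closure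
  have hxhK : xh ∈ K := hCK hxhC
  have hballK : ∀ i, closedBall (c i) (r i) ⊆ K := by
    intro i
    calc closedBall (c i) (r i) ⊆ ⋃ i, closedBall (c i) (r i) := subset_iUnion (fun i => closedBall (c i) (r i)) i
    _ ⊆ convexHull ℝ (⋃ i, closedBall (c i) (r i)) := subset_convexHull ℝ _
    _ ⊆ K := subset_closure
  set d : ℝ := infDist 0 K with hd
  have hdpos : 0 < d := by
    rw [hd]
    exact (hKcl.notMem_iff_infDist_pos ⟨xh, hxhK⟩).mp h0K
  -- Hahn-Banach separation of the ball from K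
  have hdisj : Disjoint (Metric.ball (0:X) d) K := by
    rw [Set.disjoint_left]
    intro a ha haK
    rw [mem_ball, dist_comm] at ha
    exact absurd (infDist_le_dist_of_mem haK) (not_le.mpr ha)
  obtain ⟨φ, u, hub, hlb⟩ :=
    geometric_hahn_banach_open (convex_ball 0 d) isOpen_ball hKconv hdisj
  have hu0 : 0 < u := by
    have := hub 0 (mem_ball_self hdpos)
    simpa using this
  have hφbound : ∀ x : X, |φ x| ≤ (2*u/d) * ‖x‖ := by
    intro x
    rcases eq_or_ne x 0 with rfl | hx0
    · simp
    · have hxn : 0 < ‖x‖ := norm_pos_iff.mpr hx0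
      set z : X := (d/(2*‖x‖)) • x with hz
      have hzball : z ∈ Metric.ball (0:X) d := by
        rw [mem_ball_zero_iff, hz, norm_smul, Real.norm_eq_abs,
          abs_of_pos (by positivity : (0:ℝ) < d/(2*‖x‖))]
        rw [div_mul_eq_mul_div, mul_comm]
        rw [div_lt_iff₀ (by positivity : (0:ℝ) < 2*‖x‖)]
        nlinarith
      have hzball' : -z ∈ Metric.ball (0:X) d := by
        rwa [mem_ball_zero_iff, norm_neg, ← mem_ball_zero_iff]
      have h1 : φ z < u := hub z hzball
      have h2 : -φ z < u := by
        have := hub (-z) hzball'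
        rwa [map_neg] at this
      have h3 : |φ z| ≤ u := abs_le.mpr ⟨by linarith, h1.le⟩
      have h4 : φ z = (d/(2*‖x‖)) * φ x := by rw [hz, map_smul, smul_eq_mul]
      rw [h4, abs_mul, abs_of_pos (by positivity : (0:ℝ) < d/(2*‖x‖))] at h3
      rw [div_mul_eq_mul_div, div_le_iff₀ (by positivity : (0:ℝ) < 2*‖x‖)] at h3
      rw [div_mul_eq_mul_div, le_div_iff₀ hdpos]
      nlinarith
  have hφnorm : ‖φ‖ ≤ 2*u/d := φ.opNorm_le_bound (by positivity) hφbound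
  have hφne : φ ≠ 0 := by
    intro h0
    have := hlb xh hxhK
    rw [h0] at this
    simpa using absurd this (by simpa using hu0)
  have hφpos : 0 < ‖φ‖ := norm_pos_iff.mpr hφne
  set hs : StrongDual ℝ X := ‖φ‖⁻¹ • φ with hhs
  have hs1 : ‖hs‖ = 1 := by
    rw [hhs, norm_smul, norm_inv, norm_norm, inv_mul_cancel₀ (ne_of_gt hφpos)]
  have hKlb : ∀ y ∈ K, d/2 ≤ hs y := by
    intro y hy
    have h1 : u ≤ φ y := hlb y hy
    have h2 : hs y = ‖φ‖⁻¹ * φ y := by rw [hhs]; simp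
    rw [h2]
    have h3 : ‖φ‖⁻¹ * u ≤ ‖φ‖⁻¹ * φ y :=
      mul_le_mul_of_nonneg_left h1 (inv_pos.mpr hφpos).le
    have h4 : d/2 ≤ ‖φ‖⁻¹ * u := by
      rw [le_inv_mul_iff₀ hφpos]
      calc ‖φ‖ * (d/2) ≤ (2*u/d) * (d/2) :=
            mul_le_mul_of_nonneg_right hφnorm (by positivity)
      _ = u := by field_simp
    linarith
  -- the key estimate
  have hEST : ∀ (h : StrongDual ℝ X), ‖h‖ ≤ 1 → ∀ a : ℝ, 0 ≤ a → (∀ y ∈ C, a ≤ h y) →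
      ‖h - h xh • f‖ ≤ 6/ρ := by
    intro h hh a ha hay
    have hker : ∀ v : X, f v = 0 → ‖v‖ ≤ 1 → |h v| ≤ 2/ρ := by
      intro v hv1 hv2
      have hmem1 : xh + ρ • v ∈ C :=
        ⟨v, ⟨mem_closedBall_zero_iff.mpr hv2, hv1⟩, rfl⟩
      have hmem2 : xh + ρ • (-v) ∈ C :=
        ⟨-v, ⟨mem_closedBall_zero_iff.mpr (by simpa using hv2), by simpa using hv1⟩, rfl⟩
      have h1 : a ≤ h xh + ρ * h v := by
        have := hay _ hmem1
        simpa [map_add, map_smul, smul_eq_mul] using this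
      have h2 : a ≤ h xh - ρ * h v := by
        have := hay _ hmem2
        simp only [map_add, map_smul, smul_eq_mul, map_neg, mul_neg] at this
        linarith
      have h3 : h xh ≤ 1 + σ := by
        calc h xh ≤ |h xh| := le_abs_self _
        _ ≤ ‖h‖ * ‖xh‖ := h.le_opNorm xh
        _ ≤ 1 * (1 + σ) := mul_le_mul hh hxhn (norm_nonneg _) zero_le_one
        _ = 1 + σ := one_mul _
      have h4 : ρ * |h v| ≤ 1 + σ := by
        rcases le_total 0 (h v) with h' | h'
        · rw [abs_of_nonneg h']; nlinarith
        · rw [abs_of_nonpos h']; nlinarith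
      rw [le_div_iff₀ hρpos]
      have hσ1 : σ ≤ 1 := by linarith
      nlinarith
    have hgen : ∀ v : X, f v = 0 → |h v| ≤ (2/ρ) * ‖v‖ := by
      intro v hv
      rcases eq_or_ne v 0 with rfl | hv0
      · simp
      · have hvn : 0 < ‖v‖ := norm_pos_iff.mpr hv0
        have := hker (‖v‖⁻¹ • v) (by rw [map_smul, hv, smul_eq_mul, mul_zero])
          (by rw [norm_smul, norm_inv, norm_norm, inv_mul_cancel₀ (ne_of_gt hvn)])
        rw [map_smul, smul_eq_mul, abs_mul, abs_of_pos (inv_pos.mpr hvn)] at this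
        rw [inv_mul_le_iff₀ hvn] at this
        calc |h v| ≤ 2/ρ * ‖v‖ := by linarith [this]
        _ = (2/ρ) * ‖v‖ := by ring
    apply ContinuousLinearMap.opNorm_le_bound _ (by positivity)
    intro x
    have hkerx : f (x - f x • xh) = 0 := by
      rw [map_sub, map_smul, smul_eq_mul, hfxh, mul_one, sub_self]
    have hnorm : ‖x - f x • xh‖ ≤ 3 * ‖x‖ := by
      calc ‖x - f x • xh‖ ≤ ‖x‖ + ‖f x • xh‖ := norm_sub_le _ _
      _ = ‖x‖ + |f x| * ‖xh‖ := by rw [norm_smul, Real.norm_eq_abs]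
      _ ≤ ‖x‖ + ‖x‖ * (1 + σ) := by
          have h5 : |f x| ≤ ‖x‖ := by
            have := f.le_opNorm x
            rwa [hf, one_mul] at this
          have h6 : 0 ≤ |f x| := abs_nonneg _
          nlinarith [hxhn, norm_nonneg x, norm_nonneg xh]
      _ ≤ 3 * ‖x‖ := by nlinarith [norm_nonneg x, hσle]
    have happ : (h - h xh • f) x = h (x - f x • xh) := by
      simp only [ContinuousLinearMap.sub_apply, ContinuousLinearMap.smul_apply,
        smul_eq_mul, map_sub, map_smul]
      ring
    rw [Real.norm_eq_abs, happ]
    calc |h (x - f x • xh)| ≤ (2/ρ) * ‖x - f x • xh‖ := hgen _ hkerx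
    _ ≤ (2/ρ) * (3 * ‖x‖) := by
        apply mul_le_mul_of_nonneg_left hnorm (by positivity)
    _ = 6/ρ * ‖x‖ := by ring
  -- h* satisfies the estimate
  have hsC : ∀ y ∈ C, d/2 ≤ hs y := fun y hy => hKlb y (hCK hy)
  have hsEST : ‖hs - hs xh • f‖ ≤ 6/ρ := hEST hs hs1.le (d/2) (by positivity) hsC
  have hsxh : 1 - 6/ρ ≤ hs xh := by
    have h1 : ‖hs‖ ≤ ‖hs - hs xh • f‖ + ‖hs xh • f‖ := by
      calc ‖hs‖ = ‖(hs - hs xh • f) + hs xh • f‖ := by congr 1; abel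
      _ ≤ _ := norm_add_le _ _
    rw [hs1] at h1
    have h2 : ‖hs xh • f‖ = |hs xh| := by
      rw [norm_smul, Real.norm_eq_abs, hf, mul_one]
    rw [h2] at h1
    have h3 : d/2 ≤ hs xh := hsC xh hxhC
    have h4 : |hs xh| = hs xh := abs_of_pos (lt_of_lt_of_le (by positivity) h3)
    rw [h4] at h1
    linarith [hsEST]
  have h6ρ : 6/ρ = 6 * ε' / 100 := by
    rw [hρ]
    field_simp
  -- the weak-star open set
  set V : Set (StrongDual ℝ X) :=
    {h : StrongDual ℝ X | (∀ i, r i + d/4 < h (c i)) ∧ 1 - ε'/4 < h xh} with hV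
  have hsV : hs ∈ V := by
    constructor
    · intro i
      set τ : ℝ := d/(8*(r i + 1)) with hτ
      have hτpos : 0 < τ := div_pos hdpos (by nlinarith [hrpos i])
      obtain ⟨w, hw1, hw2⟩ := exists_dir hs (show 1 - τ < ‖hs‖ by rw [hs1]; linarith)
      have hyball : c i - (r i) • w ∈ closedBall (c i) (r i) := by
        rw [mem_closedBall, dist_eq_norm]
        have habel : c i - r i • w - c i = -(r i • w) := by abel
        rw [habel, norm_neg, norm_smul, Real.norm_eq_abs, abs_of_pos (hrpos i)]
        nlinarith [hrpos i]
      have hyK := hballK i hyball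
      have h1 : d/2 ≤ hs (c i - r i • w) := hKlb _ hyK
      have h2 : hs (c i - r i • w) = hs (c i) - r i * hs w := by
        simp [map_sub, map_smul, smul_eq_mul]
      have h3 : r i * (1 - τ) < r i * hs w := mul_lt_mul_of_pos_left hw2 (hrpos i)
      have h4 : r i * τ ≤ d/8 := by
        have h8 : (0:ℝ) < 8*(r i + 1) := by nlinarith [hrpos i]
        rw [hτ, mul_div_assoc']
        rw [div_le_div_iff₀ h8 (by norm_num : (0:ℝ) < 8)]
        nlinarith [hrpos i, hdpos]
      have hexp : r i * (1 - τ) = r i - r i * τ := by ring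
      linarith [h1, h2, h3, h4, hexp, hdpos]
    · have h5 : 6 * ε' / 100 < ε'/4 := by linarith
      rw [h6ρ] at hsxh
      linarith
  have hVsub : ∀ h ∈ V, ‖h‖ ≤ 1 → ‖h - f‖ < ε' := by
    intro h hhV hh
    have hballlb : ∀ i, ∀ y ∈ closedBall (c i) (r i), d/4 ≤ h y := by
      intro i y hy
      have h1 := ball_lower_bound h (c i) (r i) hy
      have h2 : r i * ‖h‖ ≤ r i := by nlinarith [hrpos i]
      have h3 := hhV.1 i
      linarith
    have hKlb' := hull_lower_bound c r h (d/4) hballlb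
    have hCd : ∀ y ∈ C, d/4 ≤ h y := fun y hy => hKlb' y (hCK hy)
    have hest := hEST h hh (d/4) (by positivity) hCd
    have hup : h xh ≤ 1 + σ := by
      calc h xh ≤ |h xh| := le_abs_self _
      _ ≤ ‖h‖ * ‖xh‖ := h.le_opNorm xh
      _ ≤ 1 * (1 + σ) := mul_le_mul hh hxhn (norm_nonneg _) zero_le_one
      _ = 1 + σ := one_mul _
    have hxh1 : |h xh - 1| ≤ ε'/4 := by
      have hlow : 1 - ε'/4 < h xh := hhV.2
      rw [abs_le]
      constructor
      · linarith
      · have : σ ≤ ε'/4 := by rw [hσ]; linarith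
        linarith
    have hdecomp : h - f = (h - h xh • f) + (h xh - 1) • f := by
      ext x
      simp only [ContinuousLinearMap.add_apply, ContinuousLinearMap.sub_apply,
        ContinuousLinearMap.smul_apply, smul_eq_mul]
      ring
    rw [hdecomp]
    calc ‖(h - h xh • f) + (h xh - 1) • f‖ ≤ ‖h - h xh • f‖ + ‖(h xh - 1) • f‖ :=
          norm_add_le _ _
    _ ≤ 6/ρ + |h xh - 1| := by
        rw [norm_smul, Real.norm_eq_abs, hf, mul_one]
        linarith [hest]
    _ < ε' := by
        rw [h6ρ]
        linarith
  refine ⟨V, ?_, ⟨hs, hsV, mem_closedBall_zero_iff.mpr hs1.le⟩, ?_⟩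
  · rw [IsWeakStarOpen, image_toWeakDual]
    have heq : {w : WeakDual ℝ X | WeakDual.toStrongDual w ∈ V}
        = (⋂ i, {w : WeakDual ℝ X | r i + d/4 < w (c i)})
          ∩ {w : WeakDual ℝ X | 1 - ε'/4 < w xh} := by
      ext w
      simp only [Set.mem_setOf_eq, Set.mem_inter_iff, Set.mem_iInter, hV]
      exact Iff.rfl
    rw [heq]
    apply IsOpen.inter
    · apply isOpen_iInter_of_finite
      intro i
      have hset : {w : WeakDual ℝ X | r i + d/4 < w (c i)}
          = (fun w : WeakDual ℝ X => w (c i)) ⁻¹' (Ioi (r i + d/4)) := rfl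
      rw [hset]
      exact (WeakDual.eval_continuous (c i)).isOpen_preimage _ isOpen_Ioi
    · have hset : {w : WeakDual ℝ X | 1 - ε'/4 < w xh}
          = (fun w : WeakDual ℝ X => w xh) ⁻¹' (Ioi (1 - ε'/4)) := rfl
      rw [hset]
      exact (WeakDual.eval_continuous xh).isOpen_preimage _ isOpen_Ioi
  · rintro h ⟨hhV, hhB⟩
    rw [mem_ball_iff_norm]
    exact lt_of_lt_of_le (hVsub h hhV (mem_closedBall_zero_iff.mp hhB)) hε'leε

end Aux

theorem wStarSemiPC_ball_separation_characterization
    (X : Type*) [NormedAddCommGroup X] [NormedSpace ℝ X] [CompleteSpace X]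
    (f : StrongDual ℝ X) (hf : ‖f‖ = 1) :
    IsWStarSemiPC X f ↔
      ∀ C : Set X, IsBounded C → 0 < sInf (⇑f '' C) →
        ∃ (n : ℕ) (c : Fin n → X) (r : Fin n → ℝ), (∀ i, 0 < r i) ∧
          C ⊆ closure (convexHull ℝ (⋃ i, closedBall (c i) (r i))) ∧
          (0 : X) ∉ closure (convexHull ℝ (⋃ i, closedBall (c i) (r i))) := by
  constructor
  · intro hPC C hCb hCpos
    exact forward_dir hf hPC C hCb hCpos
  · intro hRHS
    exact backward_dir hf hRHS
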